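/- Foster's theorem: for a connected unweighted graph on n vertices, the sum of effective resistances over all edges equals n - 1, i.e., Σ_{(i,j)∈E} w_ij = n - 1. Consequently the sum of node resistance curvatures satisfies Σ_i p_i = n - (n-1) = 1. -/

import Mathlib

open Matrix

/-- The graph Laplacian `L = D - A`. -/
def lap {n : ℕ} (A : Matrix (Fin n) (Fin n) ℝ) : Matrix (Fin n) (Fin n) ℝ :=
  Matrix.diagonal (fun i => ∑ j, A i j) - A

/-- The Moore–Penrose conditions. -/
def IsMoorePenrose {n : ℕ} (L H : Matrix (Fin n) (Fin n) ℝ) : Prop :=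
  L * H * L = L ∧ H * L * H = H ∧ (L * H)ᵀ = L * H ∧ (H * L)ᵀ = H * L

/-- Effective resistance `w_ij = (e_i - e_j)ᵀ L† (e_i - e_j)`. -/
def effRes {n : ℕ} (Ldag : Matrix (Fin n) (Fin n) ℝ) (i j : Fin n) : ℝ :=
  (Pi.single i 1 - Pi.single j 1) ⬝ᵥ (Ldag *ᵥ (Pi.single i 1 - Pi.single j 1))

lemma quad_form {n : ℕ} (A : Matrix (Fin n) (Fin n) ℝ)
    (hA : ∀ i j, A j i = A i j) (x : Fin n → ℝ) :
    ∑ i, ∑ j, A i j * (x i - x j)^2 = 2 * (x ⬝ᵥ (lap A *ᵥ x)) := by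
  have e1 : ∑ i, ∑ j, A i j * (x j)^2 = ∑ i, ∑ j, A i j * (x i)^2 := by
    rw [Finset.sum_comm]
    exact Finset.sum_congr rfl fun j _ => Finset.sum_congr rfl fun i _ => by rw [hA]
  have e2 : x ⬝ᵥ (lap A *ᵥ x) = ∑ i, ∑ j, ((if i = j then (∑ k, A i k) * (x i * x j) else 0) - A i j * (x i * x j)) := by
    simp only [dotProduct, Matrix.mulVec, lap, Matrix.sub_apply, Matrix.diagonal_apply,
      Finset.mul_sum]
    exact Finset.sum_congr rfl fun i _ => Finset.sum_congr rfl fun j _ => by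
      split <;> ring
  rw [e2]
  simp only [Finset.sum_sub_distrib, Finset.sum_ite_eq Finset.univ, Finset.mem_univ, if_true]
  have lhs : ∑ i, ∑ j, A i j * (x i - x j)^2
      = ∑ i, ∑ j, (A i j * (x i)^2 + A i j * (x j)^2 - 2 * (A i j * (x i * x j))) := by
    exact Finset.sum_congr rfl fun i _ => Finset.sum_congr rfl fun j _ => by ring
  rw [lhs]
  simp only [Finset.sum_sub_distrib, Finset.sum_add_distrib, e1, ← Finset.mul_sum]
  simp only [Finset.mul_sum]
  ring_nf
  have e4 : ∀ i : Fin n, (∑ k, A i k) * x i * x i = ∑ j, A i j * x i ^ 2 := fun i => by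
    rw [Finset.sum_mul, Finset.sum_mul]
    exact Finset.sum_congr rfl fun j _ => by ring
  simp only [fun i => (show (∑ k, A i k) * x i ^ 2 = ∑ j, A i j * x i ^ 2 by rw [← e4]; ring)]
  congr 1
  rw [Finset.sum_mul]
  exact Finset.sum_congr rfl fun i _ => by
    rw [Finset.sum_mul]

lemma lap_ker_const {n : ℕ} (A : Matrix (Fin n) (Fin n) ℝ)
    (hnonneg : ∀ i j, 0 ≤ A i j) (hA : ∀ i j, A j i = A i j)
    (hconn : ∀ i j : Fin n, Relation.ReflTransGen (fun a b => 0 < A a b) i j)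
    (x : Fin n → ℝ) (hx : lap A *ᵥ x = 0) (i j : Fin n) : x i = x j := by
  have hq : x ⬝ᵥ (lap A *ᵥ x) = 0 := by rw [hx]; simp
  have hz : ∑ i, ∑ j, A i j * (x i - x j)^2 = 0 := by rw [quad_form A hA, hq]; ring
  have hterm : ∀ a b : Fin n, A a b * (x a - x b)^2 = 0 := by
    intro a b
    have houter := (Finset.sum_eq_zero_iff_of_nonneg
      (fun i _ => Finset.sum_nonneg fun j _ => mul_nonneg (hnonneg i j) (sq_nonneg _))).mp hz
    have hinner := (Finset.sum_eq_zero_iff_of_nonneg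
      (fun j _ => mul_nonneg (hnonneg a j) (sq_nonneg _))).mp (houter a (Finset.mem_univ a))
    exact hinner b (Finset.mem_univ b)
  have hadj : ∀ a b : Fin n, 0 < A a b → x a = x b := by
    intro a b hab
    have := hterm a b
    have h2 : (x a - x b)^2 = 0 := by
      rcases mul_eq_zero.mp this with h | h
      · exact absurd h (ne_of_gt hab)
      · exact h
    have := pow_eq_zero_iff (n := 2) (by norm_num) |>.mp h2
    linarith [sub_eq_zero.mp this]
  induction hconn i j with
  | refl => rfl
  | tail _ hbc ih => exact ih.trans (hadj _ _ hbc)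

lemma effRes_expand {n : ℕ} (H : Matrix (Fin n) (Fin n) ℝ) (i j : Fin n) :
    effRes H i j = H i i + H j j - H i j - H j i := by
  simp [effRes, dotProduct, Matrix.mulVec, sub_mul, mul_sub, Finset.sum_sub_distrib,
    Pi.single_apply, ite_mul, mul_ite, Finset.sum_ite_eq, Finset.sum_ite_eq']
  ring

/-- Foster's theorem: for a connected unweighted graph on `n` vertices, the sum
of effective resistances over all edges equals `n - 1` (each edge appears twice
in the ordered double sum, whence the factor `1/2`). Consequently the node
resistance curvatures `p_i = 1 - (1/2)∑_{j∼i} w_ij` sum to `1`. -/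
theorem foster_theorem {n : ℕ} (hn : 1 ≤ n) (A : Matrix (Fin n) (Fin n) ℝ)
    (h01 : ∀ i j, A i j = 0 ∨ A i j = 1)
    (hsymm : A.IsSymm) (hdiag : ∀ i, A i i = 0)
    (hconn : ∀ i j : Fin n, Relation.ReflTransGen (fun a b => 0 < A a b) i j)
    (Ldag : Matrix (Fin n) (Fin n) ℝ) (hMP : IsMoorePenrose (lap A) Ldag) :
    (1 / 2) * (∑ i, ∑ j, A i j * effRes Ldag i j) = (n : ℝ) - 1 ∧
    ∑ i, (1 - (1 / 2) * ∑ j, A i j * effRes Ldag i j) = 1 := by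
  obtain ⟨h1, h2, h3, h4⟩ := hMP
  set L := lap A with hLdef
  set H := Ldag with hHdef
  have hA : ∀ i j, A j i = A i j := fun i j => congrFun (congrFun hsymm i) j
  have hnonneg : ∀ i j, 0 ≤ A i j := fun i j => by
    rcases h01 i j with h | h <;> rw [h] <;> norm_num
  set Q : Matrix (Fin n) (Fin n) ℝ := 1 - H * L with hQdef
  have hLQ : L * Q = 0 := by
    rw [hQdef, Matrix.mul_sub, Matrix.mul_one, ← Matrix.mul_assoc, h1, sub_self]
  have hQsym : ∀ i j, Q i j = Q j i := by
    intro i j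
    have ht : Qᵀ = Q := by rw [hQdef, Matrix.transpose_sub, Matrix.transpose_one, h4]
    have := congrFun (congrFun ht j) i
    simpa [Matrix.transpose_apply] using this
  have hcol : ∀ j i i', Q i j = Q i' j := by
    intro j i i'
    have hvec : L *ᵥ (fun k => Q k j) = 0 := by
      funext a
      have := congrFun (congrFun hLQ a) j
      simpa [Matrix.mul_apply, Matrix.mulVec, dotProduct] using this
    exact lap_ker_const A hnonneg hA hconn _ hvec i i'
  have i0 : Fin n := ⟨0, hn⟩
  have hconst : ∀ i j, Q i j = Q i0 i0 := by
    intro i j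
    rw [hcol j i i0, hQsym i0 j, hcol i0 j i0]
  -- row sums of L are 0
  have hLrow : ∀ i, ∑ j, L i j = 0 := by
    intro i
    simp [hLdef, lap, Matrix.sub_apply, Matrix.diagonal_apply, Finset.sum_sub_distrib,
      Finset.sum_ite_eq Finset.univ]
  have hQrow : ∀ i, ∑ j, Q i j = 1 := by
    intro i
    simp only [hQdef, Matrix.sub_apply, Matrix.one_apply, Finset.sum_sub_distrib,
      Matrix.mul_apply, Finset.sum_ite_eq Finset.univ, Finset.mem_univ, if_true]
    rw [Finset.sum_comm]
    simp only [← Finset.mul_sum, hLrow]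
    simp
  have hc : (n : ℝ) * Q i0 i0 = 1 := by
    have h := hQrow i0
    rw [Finset.sum_congr rfl (fun j _ => hconst i0 j)] at h
    simpa [Finset.sum_const, Finset.card_univ, nsmul_eq_mul] using h
  have htrQ : ∑ i, Q i i = 1 := by
    rw [Finset.sum_congr rfl (fun i _ => hconst i i)]
    simpa [Finset.sum_const, Finset.card_univ, nsmul_eq_mul] using hc
  have htrHL : ∑ i, ∑ k, H i k * L k i = (n : ℝ) - 1 := by
    have : ∀ i, Q i i = 1 - ∑ k, H i k * L k i := by
      intro i
      simp [hQdef, Matrix.sub_apply, Matrix.one_apply, Matrix.mul_apply]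
    rw [Finset.sum_congr rfl (fun i _ => this i)] at htrQ
    rw [Finset.sum_sub_distrib] at htrQ
    simp only [Finset.sum_const, Finset.card_univ, Fintype.card_fin, nsmul_eq_mul, mul_one] at htrQ
    linarith
  -- key: the double sum equals 2*(n-1)
  have hT1 : ∑ i, ∑ j, A i j * Ldag j j = ∑ i, ∑ j, A i j * Ldag i i := by
    rw [Finset.sum_comm]
    exact Finset.sum_congr rfl fun j _ => Finset.sum_congr rfl fun i _ => by rw [hA]
  have hT2 : ∑ i, ∑ j, A i j * Ldag i j = ∑ i, ∑ j, A i j * Ldag j i := by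
    rw [Finset.sum_comm]
    exact Finset.sum_congr rfl fun j _ => Finset.sum_congr rfl fun i _ => by rw [hA]
  have htr : ∑ i, ∑ j, A i j * Ldag i i - ∑ i, ∑ j, A i j * Ldag i j = (n : ℝ) - 1 := by
    rw [← htrHL, ← Finset.sum_sub_distrib]
    refine Finset.sum_congr rfl fun i _ => ?_
    have e : ∀ k, H i k * L k i = (if k = i then (∑ j, A k j) * H i k else 0) - A i k * H i k := by
      intro k
      simp only [hLdef, lap, Matrix.sub_apply, Matrix.diagonal_apply]
      rw [hA]
      split <;> ring
    rw [Finset.sum_congr rfl fun k _ => e k, Finset.sum_sub_distrib,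
      Finset.sum_ite_eq' Finset.univ i (fun k => (∑ j, A k j) * H i k)]
    simp only [Finset.mem_univ, if_true]
    congr 1
    rw [Finset.sum_mul]
  have hS : ∑ i, ∑ j, A i j * effRes Ldag i j = 2 * ((n : ℝ) - 1) := by
    have : ∀ i j, A i j * effRes Ldag i j
        = A i j * Ldag i i + A i j * Ldag j j - A i j * Ldag i j - A i j * Ldag j i := by
      intro i j; rw [effRes_expand]; ring
    simp only [this]
    simp only [Finset.sum_sub_distrib, Finset.sum_add_distrib, hT1, ← hT2]
    rw [sub_sub, ← two_mul, ← two_mul, ← mul_sub, htr]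
  constructor
  · rw [hS]; ring
  · rw [Finset.sum_sub_distrib]
    simp only [Finset.sum_const, Finset.card_univ, Fintype.card_fin, nsmul_eq_mul, mul_one]
    rw [← Finset.mul_sum, hS]
    push_cast
    ring
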